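/- For 0 < x ≤ π/2, one has 1/sin(x) ≤ 1/x + x/3. -/
import Mathlib

lemma sin_ge_sub_cube_div_six (x : ℝ) (hx : 0 ≤ x) :
    x - x ^ 3 / 6 ≤ Real.sin x := by
  have hmono : Monotone (fun y : ℝ => Real.sin y - y + y ^ 3 / 6) := by
    apply monotone_of_deriv_nonneg
    · fun_prop
    · intro y
      have hd : HasDerivAt (fun y : ℝ => Real.sin y - y + y ^ 3 / 6)
          (Real.cos y - 1 + 3 * y ^ 2 / 6) y :=
        ((Real.hasDerivAt_sin y).sub (hasDerivAt_id y)).add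
          ((hasDerivAt_pow 3 y).div_const 6)
      rw [hd.deriv]
      have := Real.one_sub_sq_div_two_le_cos (x := y)
      linarith
  have h0 := hmono hx
  simp at h0
  linarith

/-- For `0 < x ≤ π/2`: `1/sin x ≤ 1/x + x/3`. -/
theorem inv_sin_le (x : ℝ) (hx0 : 0 < x) (hx : x ≤ Real.pi / 2) :
    1 / Real.sin x ≤ 1 / x + x / 3 := by
  have hpi := Real.pi_pos
  have hs : 0 < Real.sin x :=
    Real.sin_pos_of_pos_of_lt_pi hx0 (by linarith)
  have hge := sin_ge_sub_cube_div_six x hx0.le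
  have hx2 : x ^ 2 ≤ 3 := by nlinarith [Real.pi_lt_d2]
  rw [div_add_div _ _ (ne_of_gt hx0) (by norm_num : (3:ℝ) ≠ 0),
    div_le_div_iff₀ hs (by positivity)]
  nlinarith [mul_nonneg (pow_nonneg hx0.le 3) (sub_nonneg.2 hx2),
    mul_le_mul_of_nonneg_left hge (by positivity : (0:ℝ) ≤ 3 + x ^ 2)]
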